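/- Fix integers K ≥ m ≥ 1, ε > 0, c : T_{K,m} → [0,1/K], and x ∈ [0,1]^K. If during the run of the partition algorithm on x the assignment P ← P̂ occurs (i.e., P̂ is visited by the while loop), then x obeys all the inequalities of the DOP P̂: for every pair of consecutive parts S_a > S_b of P̂, one has min_{k∈S_a} x(k) ≥ max_{ℓ∈S_b} x(ℓ). -/

import Mathlib

open Classical

noncomputable section

namespace MPB

variable (K m : ℕ)

/-- Max of `x` over a finite set of coordinates. -/
def fmax (x : Fin K → ℝ) (S : Finset (Fin K)) : ℝ := sSup (x '' ↑S)

/-- Min of `x` over a finite set of coordinates. -/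
def fmin (x : Fin K → ℝ) (S : Finset (Fin K)) : ℝ := sInf (x '' ↑S)

/-- range_B(x) = max_{k∈B} x(k) - min_{k∈B} x(k). -/
def rangeX (x : Fin K → ℝ) (B : Finset (Fin K)) : ℝ := fmax K x B - fmin K x B

/-- gap of the child obtained by splitting `B` into `T > B \ T`:
gap = min_{k∈T} x(k) - max_{ℓ∈B\T} x(ℓ). -/
def gapX (x : Fin K → ℝ) (T B : Finset (Fin K)) : ℝ := fmin K x T - fmax K x (B \ T)

/-- i(P): the largest `i` such that the first `i` parts of the ordered partition `L`
have total size at most `m`. -/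
def iIdx (L : List (Finset (Fin K))) : ℕ :=
  Nat.findGreatest (fun i => ((L.take i).map Finset.card).sum ≤ m) L.length

/-- A(P): the union of the first i(P) parts (the coordinates already identified as
belonging to the top m). -/
def Aset (L : List (Finset (Fin K))) : Finset (Fin K) :=
  (L.take (iIdx K m L)).foldr (· ∪ ·) ∅

/-- B(P): the currently undecided part; `∅` if `|A(P)| = m`, else the part S_{i(P)+1}. -/
def Bset (L : List (Finset (Fin K))) : Finset (Fin K) :=
  if (Aset K m L).card = m then ∅ else L.getD (iIdx K m L) ∅

/-- A vertex of the tree T_{K,m} is encoded by the sequence of splits leading to it from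
the root (head = most recently chosen top part): this recovers its underlying ordered
partition, by splitting at each step the then-current undecided set B into `T > B \ T`. -/
def partitionOf : List (Finset (Fin K)) → List (Finset (Fin K))
  | [] => [Finset.univ]
  | T :: l =>
    let L := partitionOf l
    let i := iIdx K m L
    L.take i ++ [T, L.getD i ∅ \ T] ++ L.drop (i + 1)

/-- A(P) for a vertex of T_{K,m}. -/
def Anode (l : List (Finset (Fin K))) : Finset (Fin K) := Aset K m (partitionOf K m l)

/-- B(P) for a vertex of T_{K,m}. -/
def Bnode (l : List (Finset (Fin K))) : Finset (Fin K) := Bset K m (partitionOf K m l)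

/-- Membership in T_{K,m}: each successive split must cut the current undecided set B
into a nonempty strict subset (the new top part) and the rest. The root is `[]`, a
vertex is a leaf iff its `Bnode` is empty, `T :: l` is a child of `l`, and the ancestors
of a vertex are exactly its list suffixes. -/
def Valid : List (Finset (Fin K)) → Prop
  | [] => True
  | T :: l => Valid l ∧ T.Nonempty ∧ T ⊂ Bnode K m l

/-- The elements of `B` sorted by `x` in (weakly) decreasing order,
ties broken by coordinate index (stability of merge sort). -/
def sortedB (x : Fin K → ℝ) (B : Finset (Fin K)) : List (Fin K) :=
  (B.sort (· ≤ ·)).mergeSort (fun a b => decide (x b ≤ x a))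

/-- The set `{a_1, …, a_j}` of the `j` largest coordinates of `B` under `x`. -/
def topSet (x : Fin K → ℝ) (B : Finset (Fin K)) (j : ℕ) : Finset (Fin K) :=
  ((sortedB K x B).take j).toFinset

/-- Line 7 of Algorithm 1: the algorithm, currently at the vertex `l`, returns `l`
because for some ancestor `q ⪯ l` and some child `q_j` of `q` (splitting B(q) at the
`j`-th position of the `x`-sorted order), the quantity `gap_{q_j}(x) - c(q)·range_q(x)`
is within `(d(l,q)+1)·6ε` of zero. -/
def stopAt (c : List (Finset (Fin K)) → ℝ) (ε : ℝ) (x : Fin K → ℝ)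
    (l : List (Finset (Fin K))) : Prop :=
  ∃ q ∈ l.tails, ∃ j, 1 ≤ j ∧ j < (Bnode K m q).card ∧
    |gapX K x (topSet K x (Bnode K m q) j) (Bnode K m q) - c q * rangeX K x (Bnode K m q)|
      ≤ ((l.length - q.length + 1 : ℕ) : ℝ) * (6 * ε)

/-- Lines 10-15 of Algorithm 1: move from `l` to the child `l_j` for the smallest
`j ∈ {1, …, ℓ-1}` with `gap_{l_j}(x) ≥ c(l)·range_l(x)`. -/
def descend (c : List (Finset (Fin K)) → ℝ) (x : Fin K → ℝ)
    (l : List (Finset (Fin K))) : List (Finset (Fin K)) :=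
  if h : ∃ j, 1 ≤ j ∧ j < (Bnode K m l).card ∧
      c l * rangeX K x (Bnode K m l)
        ≤ gapX K x (topSet K x (Bnode K m l) j) (Bnode K m l)
  then topSet K x (Bnode K m l) (Nat.find h) :: l
  else l

/-- The while loop of Algorithm 1, with fuel (the tree T_{K,m} has depth < K, so fuel K
suffices for the loop to terminate as in the paper). -/
def run (c : List (Finset (Fin K)) → ℝ) (ε : ℝ) (x : Fin K → ℝ) :
    ℕ → List (Finset (Fin K)) → List (Finset (Fin K))
  | 0, l => l
  | n + 1, l =>
    if Bnode K m l = ∅ then l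
    else if stopAt K m c ε x l then l
    else run c ε x n (descend K m c x l)

/-- The vertex P_{c,ε}(x) ∈ T_{K,m} output by Algorithm 1 on input x. The vertices
visited by the while loop are exactly the suffixes of the output. -/
def Pmap (c : List (Finset (Fin K)) → ℝ) (ε : ℝ) (x : Fin K → ℝ) :
    List (Finset (Fin K)) :=
  run K m c ε x K []

/-!
Every step of the loop splits the undecided part `B` at a position of the `x`-sorted order of
`B`, so the two new parts `T > B \ T` obey their inequality; being nonempty subsets of `B`, they
also inherit the inequalities `B` had with its neighbours. By induction along the path from the
root, every visited vertex obeys all its inequalities, whatever `c` and `ε` are: these only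
decide where the loop stops.
-/

theorem _root_.List.IsChain.replace_by_pair {α : Type*} {R : α → α → Prop} {l₁ l₂ : List α}
    {y a b : α} (h : (l₁ ++ y :: l₂).IsChain R) (hab : R a b)
    (hpre : ∀ p, R p y → R p a) (hpost : ∀ n, R y n → R b n) :
    (l₁ ++ a :: b :: l₂).IsChain R := by
  rw [List.isChain_append, List.isChain_cons] at h
  obtain ⟨h₁, ⟨hy, h₂⟩, hlast⟩ := h
  refine List.isChain_append.mpr
    ⟨h₁, List.isChain_cons_cons.mpr ⟨hab, List.isChain_cons.mpr ⟨?_, h₂⟩⟩, ?_⟩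
  · exact fun n hn => hpost n (hy n hn)
  · intro p hp a' ha'
    cases ha'
    exact hpre p (hlast p hp y rfl)

section

variable {K m : ℕ} {x : Fin K → ℝ} {S T B : Finset (Fin K)} {j : ℕ}

theorem le_fmax {k : Fin K} (hk : k ∈ S) : x k ≤ fmax K x S :=
  le_csSup (S.finite_toSet.image x).bddAbove ⟨k, hk, rfl⟩

theorem fmin_le {k : Fin K} (hk : k ∈ S) : fmin K x S ≤ x k :=
  csInf_le (S.finite_toSet.image x).bddBelow ⟨k, hk, rfl⟩

theorem fmax_le {a : ℝ} (hS : S.Nonempty) (h : ∀ k ∈ S, x k ≤ a) : fmax K x S ≤ a :=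
  csSup_le ((Finset.coe_nonempty.mpr hS).image x) (by rintro _ ⟨k, hk, rfl⟩; exact h k hk)

theorem le_fmin {a : ℝ} (hS : S.Nonempty) (h : ∀ k ∈ S, a ≤ x k) : a ≤ fmin K x S :=
  le_csInf ((Finset.coe_nonempty.mpr hS).image x) (by rintro _ ⟨k, hk, rfl⟩; exact h k hk)

theorem fmax_le_fmax (hST : S ⊆ T) (hS : S.Nonempty) : fmax K x S ≤ fmax K x T :=
  fmax_le hS fun _ hk => le_fmax (hST hk)

theorem fmin_le_fmin (hST : S ⊆ T) (hS : S.Nonempty) : fmin K x T ≤ fmin K x S :=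
  le_fmin hS fun _ hk => fmin_le (hST hk)

theorem mem_sortedB {k : Fin K} : k ∈ sortedB K x B ↔ k ∈ B := by
  rw [sortedB, (List.mergeSort_perm _ _).mem_iff, Finset.mem_sort]

theorem length_sortedB : (sortedB K x B).length = B.card := by
  rw [sortedB, (List.mergeSort_perm _ _).length_eq, Finset.length_sort]

theorem sortedB_pairwise : (sortedB K x B).Pairwise (fun a b => x b ≤ x a) := by
  refine (List.pairwise_mergeSort ?_ ?_ _).imp fun h => of_decide_eq_true h
  · intro a b c hab hbc
    simp only [decide_eq_true_eq] at *
    exact hbc.trans hab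
  · intro a b
    simpa using le_total (x b) (x a)

theorem topSet_subset : topSet K x B j ⊆ B := fun _ hk =>
  mem_sortedB.mp (List.mem_of_mem_take (List.mem_toFinset.mp hk))

theorem card_topSet_le : (topSet K x B j).card ≤ j :=
  (List.toFinset_card_le _).trans (List.length_take_le _ _)

theorem topSet_nonempty (hj : 1 ≤ j) (hjB : j ≤ B.card) : (topSet K x B j).Nonempty := by
  have hlen : 0 < ((sortedB K x B).take j).length := by
    rw [List.length_take, length_sortedB]; omega
  obtain ⟨a, ha⟩ := List.exists_mem_of_length_pos hlen
  exact ⟨a, List.mem_toFinset.mpr ha⟩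

theorem sdiff_topSet_nonempty (hjB : j < B.card) : (B \ topSet K x B j).Nonempty :=
  Finset.sdiff_nonempty.mpr fun hB => by
    have := (Finset.card_le_card hB).trans card_topSet_le; omega

theorem fmax_sdiff_topSet_le_fmin_topSet (hj : 1 ≤ j) (hjB : j < B.card) :
    fmax K x (B \ topSet K x B j) ≤ fmin K x (topSet K x B j) := by
  have hsorted := sortedB_pairwise (x := x) (B := B)
  rw [← List.take_append_drop j (sortedB K x B), List.pairwise_append] at hsorted
  refine fmax_le (sdiff_topSet_nonempty hjB) fun b hb => le_fmin (topSet_nonempty hj hjB.le)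
    fun a ha => hsorted.2.2 a (List.mem_toFinset.mp ha) b ?_
  obtain ⟨hbB, hbT⟩ := Finset.mem_sdiff.mp hb
  have hb' : b ∈ sortedB K x B := mem_sortedB.mpr hbB
  rw [← List.take_append_drop j (sortedB K x B), List.mem_append] at hb'
  exact hb'.resolve_left fun h => hbT (List.mem_toFinset.mpr h)

theorem Bset_eq_getElem {L : List (Finset (Fin K))} (hB : (Bset K m L).Nonempty) :
    ∃ hi : iIdx K m L < L.length, Bset K m L = L[iIdx K m L] := by
  unfold Bset at hB ⊢
  split_ifs at hB ⊢ with hA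
  · exact absurd hB Finset.not_nonempty_empty
  · have hi : iIdx K m L < L.length := by
      by_contra! hi
      rw [List.getD_eq_default _ _ hi] at hB
      exact Finset.not_nonempty_empty hB
    exact ⟨hi, List.getD_eq_getElem _ _ hi⟩

theorem partitionOf_cons (T : Finset (Fin K)) (l : List (Finset (Fin K))) :
    partitionOf K m (T :: l) =
      (partitionOf K m l).take (iIdx K m (partitionOf K m l)) ++
        T :: ((partitionOf K m l).getD (iIdx K m (partitionOf K m l)) ∅ \ T) ::
          (partitionOf K m l).drop (iIdx K m (partitionOf K m l) + 1) := by
  simp [partitionOf]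

end

section

variable {K m : ℕ}

def ObeysOrder (x : Fin K → ℝ) (L : List (Finset (Fin K))) : Prop :=
  L.IsChain fun S S' => fmax K x S' ≤ fmin K x S

inductive SortedSplits (x : Fin K → ℝ) : List (Finset (Fin K)) → Prop
  | nil : SortedSplits x []
  | cons {l : List (Finset (Fin K))} {j : ℕ} (hj : 1 ≤ j) (hjB : j < (Bnode K m l).card)
      (hl : SortedSplits x l) : SortedSplits x (topSet K x (Bnode K m l) j :: l)

variable {x : Fin K → ℝ}

theorem SortedSplits.of_suffix {l l' : List (Finset (Fin K))}
    (hl : SortedSplits (m := m) x l) (hs : l' <:+ l) : SortedSplits (m := m) x l' := by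
  induction hl with
  | nil => rw [List.suffix_nil.mp hs]; exact .nil
  | cons hj hjB hl ih =>
    rcases List.suffix_cons_iff.mp hs with rfl | hs
    · exact .cons hj hjB hl
    · exact ih hs

theorem sortedSplits_descend {c : List (Finset (Fin K)) → ℝ} {l : List (Finset (Fin K))}
    (hl : SortedSplits (m := m) x l) : SortedSplits (m := m) x (descend K m c x l) := by
  unfold descend
  split_ifs with h
  · obtain ⟨hj, hjB, -⟩ := Nat.find_spec h
    exact .cons hj hjB hl
  · exact hl

theorem sortedSplits_run {c : List (Finset (Fin K)) → ℝ} {ε : ℝ} (n : ℕ)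
    {l : List (Finset (Fin K))} (hl : SortedSplits (m := m) x l) :
    SortedSplits (m := m) x (run K m c ε x n l) := by
  induction n generalizing l with
  | zero => exact hl
  | succ n ih =>
    rw [run]
    split_ifs
    · exact hl
    · exact hl
    · exact ih (sortedSplits_descend hl)

theorem ObeysOrder.partitionOf_cons_topSet {l : List (Finset (Fin K))} {j : ℕ} (hj : 1 ≤ j)
    (hjB : j < (Bnode K m l).card) (hl : ObeysOrder x (partitionOf K m l)) :
    ObeysOrder x (partitionOf K m (topSet K x (Bnode K m l) j :: l)) := by
  set B := Bnode K m l
  set T := topSet K x B j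
  obtain ⟨hi, hBi⟩ := Bset_eq_getElem (Finset.card_pos.mp (by omega : 0 < B.card))
  rw [partitionOf_cons, List.getD_eq_getElem _ _ hi]
  rw [ObeysOrder, ← List.take_append_drop (iIdx K m _) (partitionOf K m l),
    List.drop_eq_getElem_cons hi] at hl
  change B = _ at hBi
  rw [← hBi] at hl ⊢
  have hT : T.Nonempty := topSet_nonempty hj hjB.le
  refine hl.replace_by_pair (fmax_sdiff_topSet_le_fmin_topSet hj hjB) ?_ ?_
  · exact fun P hP => (fmax_le_fmax topSet_subset hT).trans hP
  · exact fun N hN => hN.trans (fmin_le_fmin Finset.sdiff_subset (sdiff_topSet_nonempty hjB))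

theorem SortedSplits.obeysOrder {l : List (Finset (Fin K))} (hl : SortedSplits (m := m) x l) :
    ObeysOrder x (partitionOf K m l) := by
  induction hl with
  | nil => exact List.isChain_singleton _
  | cons hj hjB _ ih => exact ih.partitionOf_cons_topSet hj hjB

end

theorem stmt7_general (K m : ℕ) (ε : ℝ)
    (c : List (Finset (Fin K)) → ℝ)
    (x : Fin K → ℝ)
    (Phat : List (Finset (Fin K))) (hvisit : Phat <:+ Pmap K m c ε x) :
    ∀ a : ℕ, a + 1 < (partitionOf K m Phat).length →
      fmax K x ((partitionOf K m Phat).getD (a + 1) ∅)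
        ≤ fmin K x ((partitionOf K m Phat).getD a ∅) := by
  have hobeys : ObeysOrder x (partitionOf K m Phat) :=
    ((sortedSplits_run K SortedSplits.nil).of_suffix hvisit).obeysOrder
  intro a ha
  rw [List.getD_eq_getElem _ _ ha, List.getD_eq_getElem _ _ (by omega)]
  exact List.isChain_iff_getElem.mp hobeys a ha

/-- Lemma 2.5, item 1: every vertex P̂ visited by the while loop of the algorithm run on
x (i.e. every suffix of the output) has x obeying all its inequalities: for every pair
of consecutive parts S_a > S_b of the ordered partition of P̂,
min_{k∈S_a} x(k) ≥ max_{ℓ∈S_b} x(ℓ). -/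
theorem stmt7 (K m : ℕ) (hm : 1 ≤ m) (hK : m ≤ K) (ε : ℝ) (hε : 0 < ε)
    (c : List (Finset (Fin K)) → ℝ)
    (hc : ∀ l, Valid K m l → c l ∈ Set.Icc (0 : ℝ) (1 / K))
    (x : Fin K → ℝ) (hx : ∀ i, x i ∈ Set.Icc (0 : ℝ) 1)
    (Phat : List (Finset (Fin K))) (hvisit : Phat <:+ Pmap K m c ε x) :
    ∀ a : ℕ, a + 1 < (partitionOf K m Phat).length →
      fmax K x ((partitionOf K m Phat).getD (a + 1) ∅)
        ≤ fmin K x ((partitionOf K m Phat).getD a ∅) :=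
  stmt7_general K m ε c x Phat hvisit

end MPB
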